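/- arXiv:2507.14576 — 2 statements merged into one kernel-verified Lean document; each statement's English description precedes it below -/
import Mathlib

section
/- For every y, x ∈ ℝ, t > 0, and τ > 0: |F^τ(y;x,t) − F̄(y;x,t)| ≤ M·(U₀·τ + (M/2)·τ²). In particular, as τ → 0+, F^τ(y;x,t) converges to F̄(y;x,t) uniformly in y. -/
open MeasureTheory Set Filter Topology

noncomputable def Mtot (ρ : Measure ℝ) : ℝ := (ρ Set.univ).toReal

noncomputable def m0 (ρ : Measure ℝ) (y : ℝ) : ℝ := (ρ (Set.Iio y)).toReal

noncomputable def m0p (ρ : Measure ℝ) (y : ℝ) : ℝ := (ρ (Set.Iic y)).toReal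

/-- `m̃₀(y) = (1/2)(ρ((−∞,y)) + ρ((−∞,y]) − M)`. -/
noncomputable def mtilde (ρ : Measure ℝ) (y : ℝ) : ℝ :=
  (m0 ρ y + m0p ρ y - Mtot ρ) / 2
/-- The time-rescaled generalized potential `F^τ(y;x,t)`. -/
noncomputable def FpotT (ρ : Measure ℝ) (u₀ : ℝ → ℝ) (τ y x t : ℝ) : ℝ :=
  ∫ η in Set.Iio y,
    (η + u₀ η * (τ * (1 - Real.exp (-t / τ ^ 2)))
       + mtilde ρ η * (τ ^ 2 - τ ^ 2 * Real.exp (-t / τ ^ 2) - t) - x) ∂ρ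

/-- The right-limit value `F^τ(y+;x,t)` (integral over `(−∞,y]`). -/
noncomputable def FpotTP (ρ : Measure ℝ) (u₀ : ℝ → ℝ) (τ y x t : ℝ) : ℝ :=
  ∫ η in Set.Iic y,
    (η + u₀ η * (τ * (1 - Real.exp (-t / τ ^ 2)))
       + mtilde ρ η * (τ ^ 2 - τ ^ 2 * Real.exp (-t / τ ^ 2) - t) - x) ∂ρ

/-- The drift potential `F̄(y;x,t)`. -/
noncomputable def Fbar (ρ : Measure ℝ) (y x t : ℝ) : ℝ :=
  ∫ η in Set.Iio y, (η - t * mtilde ρ η - x) ∂ρ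

/-- The right-limit value `F̄(y+;x,t)` (integral over `(−∞,y]`). -/
noncomputable def FbarP (ρ : Measure ℝ) (y x t : ℝ) : ℝ :=
  ∫ η in Set.Iic y, (η - t * mtilde ρ η - x) ∂ρ

/-- `ν̄(x,t) = inf_y F̄(y;x,t)`. -/
noncomputable def nuBar (ρ : Measure ℝ) (x t : ℝ) : ℝ := ⨅ y : ℝ, Fbar ρ y x t

/-- `S̄(x,t)`. -/
def SBar (ρ : Measure ℝ) (x t : ℝ) : Set ℝ :=
  {y | ∃ yn : ℕ → ℝ, Tendsto yn atTop (𝓝 y) ∧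
    Tendsto (fun n => Fbar ρ (yn n) x t) atTop (𝓝 (nuBar ρ x t))}

/-! Since `τ(1 − e^{−t/τ²}) ∈ [0, τ]`, `τ²(1 − e^{−t/τ²}) ∈ [0, τ²]` and `|m̃₀| ≤ M/2`, the
integrand of `F^τ` is that of `F̄` plus a perturbation bounded by `U₀τ + (M/2)τ²` for
`ρ`-a.e. `η`; integrating over a set of mass at most `M` gives the bound, which tends to `0`
with `τ` uniformly in `y`. -/

theorem tendstoUniformly_of_dist_le_of_tendsto {ι β α : Type*} [PseudoMetricSpace α]
    {F : ι → β → α} {f : β → α} {p : Filter ι} {b : ι → ℝ} (hb : Tendsto b p (𝓝 0))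
    (h : ∀ᶠ i in p, ∀ y, dist (f y) (F i y) ≤ b i) : TendstoUniformly F f p := by
  rw [Metric.tendstoUniformly_iff]
  intro ε hε
  filter_upwards [h, hb (Iio_mem_nhds hε)] with i hi hbi y
  exact (hi y).trans_lt hbi

theorem norm_integral_add_sub_integral_le {α E : Type*} [MeasurableSpace α]
    [NormedAddCommGroup E] [NormedSpace ℝ E] {μ : Measure α} [IsFiniteMeasure μ]
    {g h : α → E} {C : ℝ} (hg : Integrable g μ) (hh : AEStronglyMeasurable h μ)
    (hC : ∀ᵐ x ∂μ, ‖h x‖ ≤ C) :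
    ‖∫ x, (g x + h x) ∂μ - ∫ x, g x ∂μ‖ ≤ C * μ.real univ := by
  have hh_int : Integrable h μ := (integrable_const C).mono' hh hC
  rw [integral_add hg hh_int, add_sub_cancel_left]
  exact norm_integral_le_of_norm_le_const hC

theorem one_sub_exp_neg_div_mem_Icc {t s : ℝ} (ht : 0 ≤ t) (hs : 0 ≤ s) :
    1 - Real.exp (-t / s) ∈ Icc 0 1 := by
  have hle : Real.exp (-t / s) ≤ 1 :=
    Real.exp_le_one_iff.2 (div_nonpos_of_nonpos_of_nonneg (neg_nonpos.2 ht) hs)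
  constructor <;> linarith [Real.exp_pos (-t / s)]

section Potentials

variable (ρ : Measure ℝ) [IsFiniteMeasure ρ]

theorem monotone_mtilde : Monotone (mtilde ρ) := by
  intro a b hab
  have h_lt : m0 ρ a ≤ m0 ρ b := measureReal_mono (Iio_subset_Iio hab)
  have h_le : m0p ρ a ≤ m0p ρ b := measureReal_mono (Iic_subset_Iic.2 hab)
  unfold mtilde
  linarith

theorem measurable_mtilde : Measurable (mtilde ρ) := (monotone_mtilde ρ).measurable

theorem abs_mtilde_le (y : ℝ) : |mtilde ρ y| ≤ Mtot ρ / 2 := by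
  have h_lt : m0 ρ y ≤ Mtot ρ := measureReal_mono (subset_univ _)
  have h_le : m0p ρ y ≤ Mtot ρ := measureReal_mono (subset_univ _)
  have h_lt₀ : 0 ≤ m0 ρ y := measureReal_nonneg
  have h_le₀ : 0 ≤ m0p ρ y := measureReal_nonneg
  rw [abs_le, mtilde]
  constructor <;> linarith

theorem integrable_drift (hmom : Integrable (fun η : ℝ => η) ρ) (x t : ℝ) :
    Integrable (fun η => η - t * mtilde ρ η - x) ρ := by
  refine (hmom.sub ?_).sub (integrable_const x)
  refine (integrable_const (|t| * (Mtot ρ / 2))).mono'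
    ((measurable_mtilde ρ).const_mul t).aestronglyMeasurable (Eventually.of_forall fun η => ?_)
  rw [Real.norm_eq_abs, abs_mul]
  exact mul_le_mul_of_nonneg_left (abs_mtilde_le ρ η) (abs_nonneg t)

theorem abs_FpotT_sub_Fbar_le (u₀ : ℝ → ℝ) (U₀ : ℝ) (hU₀ : 0 ≤ U₀)
    (hmom : Integrable (fun η : ℝ => η) ρ) (humeas : Measurable u₀)
    (hu : ∀ᵐ η ∂ρ, |u₀ η| ≤ U₀) {t τ : ℝ} (ht : 0 ≤ t) (hτ : 0 ≤ τ) (y x : ℝ) :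
    |FpotT ρ u₀ τ y x t - Fbar ρ y x t| ≤ Mtot ρ * (U₀ * τ + Mtot ρ / 2 * τ ^ 2) := by
  set s := 1 - Real.exp (-t / τ ^ 2)
  obtain ⟨hs₀, hs₁⟩ : s ∈ Icc 0 1 := one_sub_exp_neg_div_mem_Icc ht (sq_nonneg τ)
  set C := U₀ * τ + Mtot ρ / 2 * τ ^ 2
  have hperturb : ∀ᵐ η ∂ρ.restrict (Iio y),
      ‖u₀ η * (τ * s) + mtilde ρ η * (τ ^ 2 * s)‖ ≤ C := by
    filter_upwards [ae_restrict_of_ae hu] with η hη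
    have hm := abs_mtilde_le ρ η
    rw [Real.norm_eq_abs]
    calc |u₀ η * (τ * s) + mtilde ρ η * (τ ^ 2 * s)|
        ≤ |u₀ η| * (τ * s) + |mtilde ρ η| * (τ ^ 2 * s) := by
          refine (abs_add_le _ _).trans_eq ?_
          rw [abs_mul (u₀ η), abs_mul (mtilde ρ η), abs_of_nonneg (by positivity : 0 ≤ τ * s),
            abs_of_nonneg (by positivity : 0 ≤ τ ^ 2 * s)]
      _ ≤ U₀ * τ + Mtot ρ / 2 * τ ^ 2 :=
          add_le_add (mul_le_mul hη (mul_le_of_le_one_right hτ hs₁) (by positivity) hU₀)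
            (mul_le_mul hm (mul_le_of_le_one_right (sq_nonneg τ) hs₁) (by positivity)
              ((abs_nonneg _).trans hm))
  have hmass : (ρ.restrict (Iio y)).real univ ≤ Mtot ρ := by
    rw [measureReal_restrict_apply_univ]
    exact measureReal_mono (subset_univ _)
  have hbound := norm_integral_add_sub_integral_le (integrable_drift ρ hmom x t).restrict
    (((humeas.mul_const _).add ((measurable_mtilde ρ).mul_const _)).aestronglyMeasurable)
    hperturb
  rw [Real.norm_eq_abs] at hbound
  calc |FpotT ρ u₀ τ y x t - Fbar ρ y x t|
      = |∫ η in Iio y, ((η - t * mtilde ρ η - x)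
          + (u₀ η * (τ * s) + mtilde ρ η * (τ ^ 2 * s))) ∂ρ - Fbar ρ y x t| := by
        unfold FpotT
        congr 3
        funext η
        ring
    _ ≤ C * (ρ.restrict (Iio y)).real univ := hbound
    _ ≤ Mtot ρ * C := by
        have hM : 0 ≤ Mtot ρ := measureReal_nonneg
        rw [mul_comm]
        exact mul_le_mul_of_nonneg_right hmass (by positivity)

end Potentials

theorem stmt17 (ρ : Measure ℝ) [IsFiniteMeasure ρ] (u₀ : ℝ → ℝ) (U₀ : ℝ)
    (hU₀ : 0 ≤ U₀)
    (hmom : Integrable (fun η : ℝ => η) ρ) (humeas : Measurable u₀)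
    (hu : ∀ᵐ η ∂ρ, |u₀ η| ≤ U₀) :
    (∀ y x t τ : ℝ, 0 < t → 0 < τ →
      |FpotT ρ u₀ τ y x t - Fbar ρ y x t|
        ≤ Mtot ρ * (U₀ * τ + Mtot ρ / 2 * τ ^ 2)) ∧
    (∀ x t : ℝ, 0 < t →
      TendstoUniformly (fun τ y => FpotT ρ u₀ τ y x t) (fun y => Fbar ρ y x t)
        (𝓝[>] (0 : ℝ))) := by
  have hbound : ∀ y x t τ : ℝ, 0 < t → 0 < τ →
      |FpotT ρ u₀ τ y x t - Fbar ρ y x t| ≤ Mtot ρ * (U₀ * τ + Mtot ρ / 2 * τ ^ 2) :=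
    fun y x t τ ht hτ => abs_FpotT_sub_Fbar_le ρ u₀ U₀ hU₀ hmom humeas hu ht.le hτ.le y x
  have hcont : Continuous fun τ : ℝ => Mtot ρ * (U₀ * τ + Mtot ρ / 2 * τ ^ 2) := by fun_prop
  refine ⟨hbound, fun x t ht => tendstoUniformly_of_dist_le_of_tendsto
    ((hcont.tendsto' 0 0 (by simp)).mono_left nhdsWithin_le_nhds) ?_⟩
  filter_upwards [self_mem_nhdsWithin] with τ hτ y
  rw [dist_comm, Real.dist_eq]
  exact hbound y x t τ ht hτ
end

section
/- Fix x ∈ ℝ and t > 0. Let τₙ → 0+ and let yₙ ∈ ℝ be such that for each n, either F^{τₙ}(yₙ;x,t) ≤ F^{τₙ}(y;x,t) for all y ∈ ℝ, or F^{τₙ}(yₙ+;x,t) ≤ F^{τₙ}(y;x,t) for all y ∈ ℝ. If yₙ → ŷ, then min(F̄(ŷ;x,t), F̄(ŷ+;x,t)) = ν̄(x,t); in particular ŷ ∈ S̄(x,t). -/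
open MeasureTheory Set Filter Topology

lemma mtilde_measurable (ρ : Measure ℝ) [IsFiniteMeasure ρ] : Measurable (mtilde ρ) := by
  have h0 : Monotone (m0 ρ) := fun a b hab =>
    ENNReal.toReal_mono (measure_ne_top ρ _) (measure_mono (Set.Iio_subset_Iio hab))
  have h1 : Monotone (m0p ρ) := fun a b hab =>
    ENNReal.toReal_mono (measure_ne_top ρ _) (measure_mono (Set.Iic_subset_Iic.mpr hab))
  exact ((h0.measurable.add h1.measurable).sub measurable_const).div_const 2

lemma mtilde_abs_le (ρ : Measure ℝ) [IsFiniteMeasure ρ] (y : ℝ) : |mtilde ρ y| ≤ Mtot ρ := by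
  have h0 : 0 ≤ m0 ρ y := ENNReal.toReal_nonneg
  have h1 : 0 ≤ m0p ρ y := ENNReal.toReal_nonneg
  have h2 : m0 ρ y ≤ Mtot ρ :=
    ENNReal.toReal_mono (measure_ne_top ρ _) (measure_mono (Set.subset_univ _))
  have h3 : m0p ρ y ≤ Mtot ρ :=
    ENNReal.toReal_mono (measure_ne_top ρ _) (measure_mono (Set.subset_univ _))
  rw [mtilde, abs_le]
  constructor <;> nlinarith

lemma integrable_of_ae_bdd {ρ : Measure ℝ} [IsFiniteMeasure ρ] {f : ℝ → ℝ}
    (hf : AEStronglyMeasurable f ρ) {C : ℝ} (h : ∀ᵐ η ∂ρ, |f η| ≤ C) : Integrable f ρ :=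
  ⟨hf, HasFiniteIntegral.of_bounded (h.mono fun η hη => by simpa [Real.norm_eq_abs] using hη)⟩

theorem stmt18 (ρ : Measure ℝ) [IsFiniteMeasure ρ] (u₀ : ℝ → ℝ) (U₀ : ℝ)
    (hmom : Integrable (fun η : ℝ => η) ρ) (humeas : Measurable u₀)
    (hu : ∀ᵐ η ∂ρ, |u₀ η| ≤ U₀)
    (x t : ℝ) (ht : 0 < t)
    (τn : ℕ → ℝ) (hτn : ∀ n, 0 < τn n) (hτlim : Tendsto τn atTop (𝓝 0))
    (yn : ℕ → ℝ)
    (hmin : ∀ n, (∀ y : ℝ, FpotT ρ u₀ (τn n) (yn n) x t ≤ FpotT ρ u₀ (τn n) y x t) ∨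
                 (∀ y : ℝ, FpotTP ρ u₀ (τn n) (yn n) x t ≤ FpotT ρ u₀ (τn n) y x t))
    (yhat : ℝ) (hy : Tendsto yn atTop (𝓝 yhat)) :
    min (Fbar ρ yhat x t) (FbarP ρ yhat x t) = nuBar ρ x t ∧ yhat ∈ SBar ρ x t := by
  classical
  set M : ℝ := Mtot ρ with hM
  have hMnn : 0 ≤ M := ENNReal.toReal_nonneg
  set g : ℝ → ℝ := fun η => η - t * mtilde ρ η - x with hg
  have hmt : Measurable (mtilde ρ) := mtilde_measurable ρ
  have hmtb : ∀ y, |mtilde ρ y| ≤ M := mtilde_abs_le ρ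
  have hgint : Integrable g ρ := by
    refine Integrable.sub (Integrable.sub hmom ?_) (integrable_const x)
    refine integrable_of_ae_bdd ((hmt.const_mul t).aestronglyMeasurable)
      (C := |t| * M) (ae_of_all _ fun η => ?_)
    rw [abs_mul]
    exact mul_le_mul_of_nonneg_left (hmtb η) (abs_nonneg t)
  have hgabs : Integrable (fun η => |g η|) ρ := hgint.abs
  have hF : ∀ y, Fbar ρ y x t = ∫ η in Set.Iio y, g η ∂ρ := fun y => rfl
  have hFP : ∀ y, FbarP ρ y x t = ∫ η in Set.Iic y, g η ∂ρ := fun y => rfl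
  -- |∫_s g| ≤ ∫_u |g| for s ⊆ u
  have habs_le : ∀ s u : Set ℝ, s ⊆ u → |∫ η in s, g η ∂ρ| ≤ ∫ η in u, |g η| ∂ρ := by
    intro s u hsu
    calc |∫ η in s, g η ∂ρ| ≤ ∫ η in s, |g η| ∂ρ := by
          simpa [Real.norm_eq_abs] using norm_integral_le_integral_norm (μ := ρ.restrict s) g
      _ ≤ ∫ η in u, |g η| ∂ρ :=
          setIntegral_mono_set hgabs.integrableOn (ae_of_all _ fun _ => abs_nonneg _)
            (HasSubset.Subset.eventuallyLE hsu)
  -- bounded below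
  have hbdd : BddBelow (Set.range fun y => Fbar ρ y x t) := by
    refine ⟨-∫ η, |g η| ∂ρ, ?_⟩
    rintro _ ⟨y, rfl⟩
    have h2 := habs_le (Set.Iio y) Set.univ (Set.subset_univ _)
    rw [setIntegral_univ] at h2
    show -∫ η, |g η| ∂ρ ≤ Fbar ρ y x t
    rw [hF y]
    linarith [(abs_le.mp h2).1]
  have hnu_le : ∀ y, nuBar ρ x t ≤ Fbar ρ y x t := fun y => ciInf_le hbdd y
  -- the modulus D
  set S : ℝ → Set ℝ := fun δ => Set.Icc (yhat - δ) (yhat + δ) \ {yhat} with hS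
  have hSmeas : ∀ δ, MeasurableSet (S δ) :=
    fun δ => measurableSet_Icc.diff (measurableSet_singleton _)
  set D : ℝ → ℝ := fun δ => ∫ η in S δ, |g η| ∂ρ with hD
  have hDnn : ∀ δ, 0 ≤ D δ := fun δ => setIntegral_nonneg (hSmeas δ) fun _ _ => abs_nonneg _
  have hband : ∀ (δ : ℝ) (s : Set ℝ), s ⊆ S δ → |∫ η in s, g η ∂ρ| ≤ D δ :=
    fun δ s hs => habs_le s (S δ) hs
  -- splitting set integrals
  have hsplit : ∀ s u : Set ℝ, MeasurableSet u → Disjoint s u →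
      (∫ η in s ∪ u, g η ∂ρ) = (∫ η in s, g η ∂ρ) + ∫ η in u, g η ∂ρ :=
    fun s u hu hd => setIntegral_union hd hu hgint.integrableOn hgint.integrableOn
  -- key comparison estimate
  have hkey : ∀ δ z : ℝ, |z - yhat| ≤ δ →
      min (Fbar ρ yhat x t) (FbarP ρ yhat x t) ≤ min (Fbar ρ z x t) (FbarP ρ z x t) + D δ := by
    intro δ z hz
    have hδ0 : 0 ≤ δ := le_trans (abs_nonneg _) hz
    rw [abs_le] at hz
    rcases lt_trichotomy z yhat with h | h | h
    · -- z < yhat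
      have hsub1 : Set.Ico z yhat ⊆ S δ := by
        rintro η ⟨h1, h2⟩
        exact ⟨⟨by linarith, by linarith⟩, by simp [ne_of_lt h2]⟩
      have hsub2 : Set.Ioo z yhat ⊆ S δ := by
        rintro η ⟨h1, h2⟩
        exact ⟨⟨by linarith, by linarith⟩, by simp [ne_of_lt h2]⟩
      have d1 : Disjoint (Set.Iio z) (Set.Ico z yhat) := by
        rw [Set.disjoint_left]
        rintro η h1 ⟨h2, -⟩
        rw [Set.mem_Iio] at h1
        exact absurd h2 (not_le.mpr h1)
      have d2 : Disjoint (Set.Iic z) (Set.Ioo z yhat) := by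
        rw [Set.disjoint_left]
        rintro η h1 ⟨h2, -⟩
        rw [Set.mem_Iic] at h1
        exact absurd h2 (not_lt.mpr h1)
      have e1 : Fbar ρ yhat x t = Fbar ρ z x t + ∫ η in Set.Ico z yhat, g η ∂ρ := by
        rw [hF yhat, hF z, ← Set.Iio_union_Ico_eq_Iio h.le]
        exact hsplit _ _ measurableSet_Ico d1
      have e2 : Fbar ρ yhat x t = FbarP ρ z x t + ∫ η in Set.Ioo z yhat, g η ∂ρ := by
        rw [hF yhat, hFP z, ← Set.Iic_union_Ioo_eq_Iio h]
        exact hsplit _ _ measurableSet_Ioo d2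
      have b1 := (abs_le.mp (hband δ _ hsub1)).2
      have b2 := (abs_le.mp (hband δ _ hsub2)).2
      have m1 : min (Fbar ρ yhat x t) (FbarP ρ yhat x t) ≤ Fbar ρ yhat x t := min_le_left _ _
      rcases le_total (Fbar ρ z x t) (FbarP ρ z x t) with hzz | hzz
      · rw [min_eq_left hzz]; linarith
      · rw [min_eq_right hzz]; linarith
    · -- z = yhat
      subst h
      have := hDnn δ
      linarith
    · -- yhat < z
      have hsub1 : Set.Ioo yhat z ⊆ S δ := by
        rintro η ⟨h1, h2⟩
        exact ⟨⟨by linarith, by linarith⟩, by simp [(ne_of_gt h1)]⟩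
      have hsub2 : Set.Ioc yhat z ⊆ S δ := by
        rintro η ⟨h1, h2⟩
        exact ⟨⟨by linarith, by linarith⟩, by simp [(ne_of_gt h1)]⟩
      have d1 : Disjoint (Set.Iic yhat) (Set.Ioo yhat z) := by
        rw [Set.disjoint_left]
        rintro η h1 ⟨h2, -⟩
        rw [Set.mem_Iic] at h1
        exact absurd h2 (not_lt.mpr h1)
      have d2 : Disjoint (Set.Iic yhat) (Set.Ioc yhat z) := by
        rw [Set.disjoint_left]
        rintro η h1 ⟨h2, -⟩
        rw [Set.mem_Iic] at h1
        exact absurd h2 (not_lt.mpr h1)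
      have e1 : Fbar ρ z x t = FbarP ρ yhat x t + ∫ η in Set.Ioo yhat z, g η ∂ρ := by
        rw [hF z, hFP yhat, ← Set.Iic_union_Ioo_eq_Iio h]
        exact hsplit _ _ measurableSet_Ioo d1
      have e2 : FbarP ρ z x t = FbarP ρ yhat x t + ∫ η in Set.Ioc yhat z, g η ∂ρ := by
        rw [hFP z, hFP yhat, ← Set.Iic_union_Ioc_eq_Iic h.le]
        exact hsplit _ _ measurableSet_Ioc d2
      have b1 := (abs_le.mp (hband δ _ hsub1)).1
      have b2 := (abs_le.mp (hband δ _ hsub2)).1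
      have m1 : min (Fbar ρ yhat x t) (FbarP ρ yhat x t) ≤ FbarP ρ yhat x t := min_le_right _ _
      rcases le_total (Fbar ρ z x t) (FbarP ρ z x t) with hzz | hzz
      · rw [min_eq_left hzz]; linarith
      · rw [min_eq_right hzz]; linarith
  -- D(1/(k+1)) → 0
  have hseq0 : Tendsto (fun k : ℕ => (1 : ℝ) / (k + 1)) atTop (𝓝 0) :=
    tendsto_one_div_add_atTop_nhds_zero_nat
  have hDlim : Tendsto (fun k : ℕ => D (1 / ((k : ℝ) + 1))) atTop (𝓝 0) := by
    have key : Tendsto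
        (fun k : ℕ => ∫ η, (S (1 / ((k : ℝ) + 1))).indicator (fun η => |g η|) η ∂ρ)
        atTop (𝓝 (∫ _ : ℝ, (0 : ℝ) ∂ρ)) := by
      refine tendsto_integral_of_dominated_convergence (fun η => |g η|)
        (fun k => (hgabs.aestronglyMeasurable).indicator (hSmeas _)) hgabs
        (fun k => ae_of_all _ fun η => ?_) (ae_of_all _ fun η => ?_)
      · calc ‖(S (1 / ((k : ℝ) + 1))).indicator (fun η => |g η|) η‖
            ≤ ‖|g η|‖ := norm_indicator_le_norm_self _ _
          _ = |g η| := by rw [Real.norm_eq_abs, abs_abs]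
      · by_cases hη : η = yhat
        · have : ∀ k : ℕ, (S (1 / ((k : ℝ) + 1))).indicator (fun η => |g η|) η = 0 := by
            intro k
            apply Set.indicator_of_notMem
            simp [hS, hη]
          simp only [this]
          exact tendsto_const_nhds
        · have hpos : 0 < |η - yhat| := abs_pos.mpr (sub_ne_zero.mpr hη)
          have hev : ∀ᶠ k : ℕ in atTop, (1 : ℝ) / ((k : ℝ) + 1) < |η - yhat| :=
            hseq0.eventually (gt_mem_nhds hpos)
          refine Tendsto.congr' ?_ tendsto_const_nhds
          filter_upwards [hev] with k hk
          rw [eq_comm]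
          apply Set.indicator_of_notMem
          rintro ⟨⟨ha, hb⟩, -⟩
          have : |η - yhat| ≤ 1 / ((k : ℝ) + 1) := abs_sub_le_iff.mpr ⟨by linarith, by linarith⟩
          linarith
    have : (∫ _ : ℝ, (0 : ℝ) ∂ρ) = 0 := integral_zero _ _
    rw [this] at key
    refine key.congr fun k => ?_
    rw [integral_indicator (hSmeas _)]
  -- right limit: Fbar (y + 1/(k+1)) → FbarP y
  have htendR : ∀ y : ℝ, Tendsto (fun k : ℕ => Fbar ρ (y + 1 / ((k : ℝ) + 1)) x t)
      atTop (𝓝 (FbarP ρ y x t)) := by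
    intro y
    have key : Tendsto
        (fun k : ℕ => ∫ η, (Set.Iio (y + 1 / ((k : ℝ) + 1))).indicator g η ∂ρ)
        atTop (𝓝 (∫ η, (Set.Iic y).indicator g η ∂ρ)) := by
      refine tendsto_integral_of_dominated_convergence (fun η => |g η|)
        (fun k => (hgint.aestronglyMeasurable).indicator measurableSet_Iio) hgabs
        (fun k => ae_of_all _ fun η => ?_) (ae_of_all _ fun η => ?_)
      · calc ‖(Set.Iio (y + 1 / ((k : ℝ) + 1))).indicator g η‖
            ≤ ‖g η‖ := norm_indicator_le_norm_self _ _
          _ = |g η| := Real.norm_eq_abs _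
      · rcases le_or_gt η y with hη | hη
        · have hmem : ∀ k : ℕ, (Set.Iio (y + 1 / ((k : ℝ) + 1))).indicator g η = g η := by
            intro k
            apply Set.indicator_of_mem
            have hp : (0 : ℝ) < 1 / ((k : ℝ) + 1) := by positivity
            exact Set.mem_Iio.mpr (by linarith)
          rw [Set.indicator_of_mem (Set.mem_Iic.mpr hη)]
          simp only [hmem]
          exact tendsto_const_nhds
        · have hev : ∀ᶠ k : ℕ in atTop, (1 : ℝ) / ((k : ℝ) + 1) < η - y :=
            hseq0.eventually (gt_mem_nhds (by linarith))
          rw [Set.indicator_of_notMem (by simpa using hη.not_ge)]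
          refine Tendsto.congr' ?_ tendsto_const_nhds
          filter_upwards [hev] with k hk
          rw [eq_comm]
          apply Set.indicator_of_notMem
          simp only [Set.mem_Iio, not_lt]
          linarith
    have conv : ∀ k : ℕ, (∫ η, (Set.Iio (y + 1 / ((k : ℝ) + 1))).indicator g η ∂ρ)
        = Fbar ρ (y + 1 / ((k : ℝ) + 1)) x t := fun k => by
      rw [integral_indicator measurableSet_Iio, hF]
    have conv2 : (∫ η, (Set.Iic y).indicator g η ∂ρ) = FbarP ρ y x t := by
      rw [integral_indicator measurableSet_Iic, hFP]
    rw [← conv2]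
    exact key.congr conv
  -- comparison between the rescaled potential and the drift potential
  set B : ℕ → ℝ := fun n => 2 * ((|U₀| * τn n + M * (τn n) ^ 2) * M) with hB
  have hcomp : ∀ (n : ℕ) (s : Set ℝ),
      |(∫ η in s, (η + u₀ η * (τn n * (1 - Real.exp (-t / (τn n) ^ 2)))
          + mtilde ρ η * ((τn n) ^ 2 - (τn n) ^ 2 * Real.exp (-t / (τn n) ^ 2) - t) - x) ∂ρ)
        - ∫ η in s, g η ∂ρ| ≤ (|U₀| * τn n + M * (τn n) ^ 2) * M := by
    intro n s
    set τ := τn n with hτ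
    have hτ0 : 0 < τ := hτn n
    set E := Real.exp (-t / τ ^ 2) with hE
    have hE0 : 0 < E := Real.exp_pos _
    have hE1 : E ≤ 1 := by
      rw [hE, Real.exp_le_one_iff]
      apply div_nonpos_of_nonpos_of_nonneg
      · linarith
      · positivity
    set c1 : ℝ := τ * (1 - E) with hc1
    set c2 : ℝ := τ ^ 2 - τ ^ 2 * E with hc2
    have hc1b : |c1| ≤ τ := by
      rw [hc1, abs_of_nonneg (by nlinarith)]; nlinarith
    have hc2b : |c2| ≤ τ ^ 2 := by
      rw [hc2, abs_of_nonneg (by nlinarith)]; nlinarith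
    set h : ℝ → ℝ := fun η => u₀ η * c1 + mtilde ρ η * c2 with hh
    set C : ℝ := |U₀| * |c1| + M * |c2| with hC
    have hCnn : 0 ≤ C := by positivity
    have hhb : ∀ᵐ η ∂ρ, |h η| ≤ C := by
      filter_upwards [hu] with η hη
      calc |h η| ≤ |u₀ η * c1| + |mtilde ρ η * c2| := abs_add_le _ _
        _ = |u₀ η| * |c1| + |mtilde ρ η| * |c2| := by rw [abs_mul (u₀ η) c1, abs_mul (mtilde ρ η) c2]
        _ ≤ |U₀| * |c1| + M * |c2| := by
            have hb1 := hmtb η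
            have h1 : |u₀ η| ≤ |U₀| := hη.trans (le_abs_self _)
            have := abs_nonneg c1
            have := abs_nonneg c2
            have := abs_nonneg (mtilde ρ η)
            have := abs_nonneg (u₀ η)
            nlinarith
    have hhint : Integrable h ρ :=
      integrable_of_ae_bdd ((humeas.mul_const c1).add (hmt.mul_const c2)).aestronglyMeasurable hhb
    have hsum : (∫ η in s, (η + u₀ η * c1 + mtilde ρ η * (c2 - t) - x) ∂ρ)
        = (∫ η in s, g η ∂ρ) + ∫ η in s, h η ∂ρ := by
      rw [← integral_add hgint.integrableOn hhint.integrableOn]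
      refine integral_congr_ae (ae_of_all _ fun η => ?_)
      simp only [hg, hh]
      ring
    have hbndh : |∫ η in s, h η ∂ρ| ≤ C * M := by
      calc |∫ η in s, h η ∂ρ| ≤ ∫ η in s, |h η| ∂ρ := by
            simpa [Real.norm_eq_abs] using norm_integral_le_integral_norm (μ := ρ.restrict s) h
        _ ≤ ∫ _η in s, C ∂ρ :=
            integral_mono_ae hhint.abs.integrableOn (integrable_const C) (ae_restrict_of_ae hhb)
        _ = (ρ s).toReal * C := by rw [setIntegral_const, smul_eq_mul]; rfl
        _ ≤ M * C := mul_le_mul_of_nonneg_right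
            (ENNReal.toReal_mono (measure_ne_top ρ _) (measure_mono (Set.subset_univ _))) hCnn
        _ = C * M := mul_comm _ _
    have hCb : C * M ≤ (|U₀| * τ + M * τ ^ 2) * M := by
      have h1 : C ≤ |U₀| * τ + M * τ ^ 2 := by
        have := abs_nonneg U₀
        nlinarith
      exact mul_le_mul_of_nonneg_right h1 hMnn
    rw [hsum, add_sub_cancel_left]
    exact le_trans hbndh hCb
  have hFc : ∀ (n : ℕ) (y : ℝ),
      |FpotT ρ u₀ (τn n) y x t - Fbar ρ y x t| ≤ (|U₀| * τn n + M * (τn n) ^ 2) * M := by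
    intro n y
    have h2 := hcomp n (Set.Iio y)
    rw [hF y]
    exact h2
  have hFcP : ∀ (n : ℕ) (y : ℝ),
      |FpotTP ρ u₀ (τn n) y x t - FbarP ρ y x t| ≤ (|U₀| * τn n + M * (τn n) ^ 2) * M := by
    intro n y
    have h2 := hcomp n (Set.Iic y)
    rw [hFP y]
    exact h2
  have haux : ∀ n, min (Fbar ρ (yn n) x t) (FbarP ρ (yn n) x t) ≤ nuBar ρ x t + B n := by
    intro n
    have hBn : B n = 2 * ((|U₀| * τn n + M * (τn n) ^ 2) * M) := rfl
    rcases hmin n with hc | hc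
    · have h1 : ∀ y, Fbar ρ (yn n) x t - B n ≤ Fbar ρ y x t := by
        intro y
        have a1 := abs_le.mp (hFc n (yn n))
        have a2 := abs_le.mp (hFc n y)
        have a3 := hc y
        rw [hBn]
        linarith [a1.1, a1.2, a2.1, a2.2]
      have h2 : Fbar ρ (yn n) x t - B n ≤ nuBar ρ x t := le_ciInf h1
      linarith [min_le_left (Fbar ρ (yn n) x t) (FbarP ρ (yn n) x t)]
    · have h1 : ∀ y, FbarP ρ (yn n) x t - B n ≤ Fbar ρ y x t := by
        intro y
        have a1 := abs_le.mp (hFcP n (yn n))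
        have a2 := abs_le.mp (hFc n y)
        have a3 := hc y
        rw [hBn]
        linarith [a1.1, a1.2, a2.1, a2.2]
      have h2 : FbarP ρ (yn n) x t - B n ≤ nuBar ρ x t := le_ciInf h1
      linarith [min_le_right (Fbar ρ (yn n) x t) (FbarP ρ (yn n) x t)]
  have hBlim : Tendsto B atTop (𝓝 0) := by
    have hcont : Continuous fun τ : ℝ => 2 * ((|U₀| * τ + M * τ ^ 2) * M) := by fun_prop
    have h2 := (hcont.tendsto 0).comp hτlim
    simp only [Function.comp_def] at h2
    rw [hB]
    convert h2 using 2
    norm_num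
  have hnuP : nuBar ρ x t ≤ FbarP ρ yhat x t :=
    ge_of_tendsto' (htendR yhat) fun k => hnu_le _
  have hge : nuBar ρ x t ≤ min (Fbar ρ yhat x t) (FbarP ρ yhat x t) := le_min (hnu_le yhat) hnuP
  have hle : min (Fbar ρ yhat x t) (FbarP ρ yhat x t) ≤ nuBar ρ x t := by
    refine le_of_forall_pos_le_add fun ε hε => ?_
    obtain ⟨k, hk⟩ := (hDlim.eventually (gt_mem_nhds (by linarith : (0:ℝ) < ε/2))).exists
    have hδpos : (0:ℝ) < 1 / ((k:ℝ)+1) := by positivity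
    have h1 : ∀ᶠ n in atTop, |yn n - yhat| ≤ 1 / ((k:ℝ)+1) := by
      filter_upwards [hy.eventually (Metric.closedBall_mem_nhds yhat hδpos)] with n hn
      simpa [Real.dist_eq] using hn
    have h2 : ∀ᶠ n in atTop, B n < ε/2 := hBlim.eventually (gt_mem_nhds (by linarith))
    obtain ⟨n, hn1, hn2⟩ := (h1.and h2).exists
    have k1 := hkey (1 / ((k:ℝ)+1)) (yn n) hn1
    have k2 := haux n
    linarith
  have hmin' : min (Fbar ρ yhat x t) (FbarP ρ yhat x t) = nuBar ρ x t := le_antisymm hle hge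
  refine ⟨hmin', ?_⟩
  rcases le_total (Fbar ρ yhat x t) (FbarP ρ yhat x t) with hc | hc
  · refine ⟨fun _ => yhat, tendsto_const_nhds, ?_⟩
    rw [← hmin', min_eq_left hc]
    exact tendsto_const_nhds
  · refine ⟨fun k => yhat + 1 / ((k:ℝ)+1), ?_, ?_⟩
    · simpa using (tendsto_const_nhds (x := yhat)).add hseq0
    · rw [← hmin', min_eq_right hc]
      exact htendR yhat
end
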